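/- Let κ ∈ C² be nonzero, J the matrix with rows (0,i) and (−i,0), and Zκ = J·conj(κ). Then the Hermitian matrices κκ* and κκᵀJ + J·conj(κ)·κ* are linearly independent over R. -/

import Mathlib

/-!
Both matrices send `κ` into the plane spanned by `κ` and `Z = J κ̄`: since `J` is
skew-symmetric, `κᵀ J κ = 0`, so `κκ* κ = |κ|² κ` and `(κκᵀJ + J κ̄ κ*) κ = |κ|² Z`.
Skew-symmetry also gives `κ* Z = 0`, and `Z ≠ 0` because `J² = 1`, so `κ` and `Z` are
orthogonal nonzero vectors, hence independent; a linear relation between the two matrices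
would give one between `κ` and `Z`. The argument even gives independence over `ℂ`.
-/

open Matrix

/-- The matrix `J`. -/
noncomputable def Jmat : Matrix (Fin 2) (Fin 2) ℂ := !![0, Complex.I; -Complex.I, 0]

section

variable {m n K : Type*} [Fintype n]

theorem dotProduct_mulVec_self_eq_zero_of_transpose_eq_neg [CommRing K] [NoZeroDivisors K]
    [CharZero K] {A : Matrix n n K} (hA : Aᵀ = -A) (v : n → K) : v ⬝ᵥ (A *ᵥ v) = 0 := by
  rw [← CharZero.neg_eq_self_iff]
  calc -(v ⬝ᵥ (A *ᵥ v)) = v ⬝ᵥ (Aᵀ *ᵥ v) := by rw [hA, neg_mulVec, dotProduct_neg]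
    _ = v ⬝ᵥ (A *ᵥ v) := by rw [mulVec_transpose, dotProduct_comm, dotProduct_mulVec]

theorem linearIndependent_pair_of_star_dotProduct_eq_zero [Field K] [PartialOrder K] [StarRing K]
    [StarOrderedRing K] {u w : n → K} (hu : u ≠ 0) (hw : w ≠ 0) (huw : star u ⬝ᵥ w = 0) :
    LinearIndependent K ![u, w] := by
  rw [LinearIndependent.pair_iff]
  intro s t hst
  obtain rfl : s = 0 := by
    simpa [dotProduct_add, dotProduct_smul, huw, hu] using congrArg (star u ⬝ᵥ ·) hst
  exact ⟨rfl, by simpa [hw] using hst⟩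

theorem LinearIndependent.pair_of_mulVec [CommSemiring K] {M N : Matrix m n K} (v : n → K)
    (h : LinearIndependent K ![M *ᵥ v, N *ᵥ v]) : LinearIndependent K ![M, N] := by
  apply LinearIndependent.of_comp ((mulVecBilin K K).flip v)
  convert h using 1
  ext i : 1
  fin_cases i <;> rfl

end

theorem Jmat_transpose : Jmatᵀ = -Jmat := by
  ext i j; fin_cases i <;> fin_cases j <;> simp [Jmat]

theorem Jmat_mul_Jmat : Jmat * Jmat = 1 := by
  ext i j; fin_cases i <;> fin_cases j <;> simp [Jmat]

theorem Jmat_mulVec_ne_zero {v : Fin 2 → ℂ} (hv : v ≠ 0) : Jmat *ᵥ v ≠ 0 := by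
  intro h
  apply hv
  rw [← one_mulVec v, ← Jmat_mul_Jmat, ← mulVec_mulVec, h, mulVec_zero]

theorem flag_vectors_linearIndependent (κ : Fin 2 → ℂ) (hκ : κ ≠ 0) :
    LinearIndependent ℝ
      ![vecMulVec κ (star κ),
        vecMulVec κ κ * Jmat + Jmat * vecMulVec (star κ) (star κ)] := by
  open scoped ComplexOrder in
  set c := star κ ⬝ᵥ κ
  have hc : c ≠ 0 := dotProduct_star_self_eq_zero.not.mpr hκ
  have hA : vecMulVec κ (star κ) *ᵥ κ = c • κ := by
    rw [vecMulVec_mulVec, op_smul_eq_smul]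
  have hB : (vecMulVec κ κ * Jmat + Jmat * vecMulVec (star κ) (star κ)) *ᵥ κ
      = c • (Jmat *ᵥ star κ) := by
    rw [add_mulVec, ← mulVec_mulVec, ← mulVec_mulVec, vecMulVec_mulVec, vecMulVec_mulVec,
      dotProduct_mulVec_self_eq_zero_of_transpose_eq_neg Jmat_transpose, op_smul_eq_smul,
      op_smul_eq_smul, zero_smul, zero_add, mulVec_smul]
  refine (LinearIndependent.pair_of_mulVec κ ?_).restrict_scalars' ℝ
  rw [hA, hB, LinearIndependent.pair_smul_smul_iff hc.isUnit hc.isUnit]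
  exact linearIndependent_pair_of_star_dotProduct_eq_zero hκ
    (Jmat_mulVec_ne_zero (star_ne_zero.mpr hκ))
    (dotProduct_mulVec_self_eq_zero_of_transpose_eq_neg Jmat_transpose _)
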